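/- Tail bound for the large-ℓ part of the partition function: for κ > -1, γ > 0 with κ+2 > γ, set L̃ = L^{1 − γ/(2(κ+2))}. For ℓ ≥ L̃ and N ≤ CL, using A_ℓ(n) ≤ φ^{-n} z_κ(φ)^ℓ with φ = exp(−ℓ/(L log L)) and z_κ(φ) ≤ C_κ (1−φ)^{−(κ+1)}, one obtains Σ_{n=0}^N A_ℓ(n) ≤ C_κ^ℓ (L log L / ℓ)^{(κ+1)ℓ} e^{ρℓ/log L}·(N+1); combined with binom(L,ℓ) ≤ (eL/ℓ)^ℓ, there exists ε ∈ (0, γ/4) such that for L large enough Σ_{ℓ ≥ L̃}^L binom(L,ℓ) (θ^ℓ/L^{ℓγ}) Σ_{n=0}^N A_ℓ(n) ≤ Σ_{ℓ ≥ L̃}^L L^{(−γ/2 + ε)ℓ} → 0 as L → ∞. -/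

import Mathlib

open Real Filter Finset

/-- Sum over compositions of `n` into `ℓ` nonnegative parts of `Π (n_y+1)^κ`. -/
noncomputable def Acomp (κ : ℝ) (ℓ n : ℕ) : ℝ :=
  ∑ x ∈ Finset.Nat.antidiagonalTuple ℓ n, ∏ y : Fin ℓ, ((x y : ℝ) + 1) ^ κ

/-- Tail (large `ℓ`) part of the partition function expansion, with cut-off
`L̃ = L^{1−γ/(2(κ+2))}`. -/
noncomputable def tailSum (κ γ θ : ℝ) (N : ℕ → ℕ) (L : ℕ) : ℝ :=
  ∑ ℓ ∈ Finset.Icc ⌈(L : ℝ) ^ (1 - γ / (2 * (κ + 2)))⌉₊ L,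
    (Nat.choose L ℓ : ℝ) * (θ ^ ℓ / (L : ℝ) ^ (ℓ * γ)) *
      ∑ n ∈ Finset.range (N L + 1), Acomp κ ℓ n

/-! Weighting `A_ℓ(n)` by `φ^n` factorises the sum over compositions, so
`∑_{n ≤ N} A_ℓ(n) ≤ φ^{-N} z_κ(φ)^ℓ`. For `φ = exp(-t)`, `0 < t ≤ 1`, one has
`z_κ(φ) ≤ C_κ t^{-(κ+1)}`: for `κ ≥ 0` half of the decay `e^{-tm}` absorbs `(m+1)^κ` and the rest
is a geometric series, and for `-1 < κ < 0` comparing `(m+1)^κ` with the increments of `m^{κ+1}`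
gives `z_κ(φ) ≤ (1-φ)/(κ+1) · z_{κ+1}(φ)`. Taking `t = ℓ/(L log L)` gives the first bound.
For `ℓ ≥ L̃` one has `(L/ℓ)^{κ+2} ≤ L^{γ/2}`, so with `binom(L,ℓ) ≤ (eL/ℓ)^ℓ` the `ℓ`-th term of the
tail is at most `(K (log L)^{κ+1} L^{-γ/2})^ℓ` for a constant `K`, hence at most `L^{-3γℓ/8}` once
`K (log L)^{κ+1} ≤ L^{γ/8}`. Since `L̃ → ∞`, eventually every term is at most `L^{-2}`, and the tail
is `O(1/L)`. -/

noncomputable def zSeries (κ φ : ℝ) : ℝ := ∑' m : ℕ, ((m : ℝ) + 1) ^ κ * φ ^ m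

lemma summable_rpow_mul_pow (κ : ℝ) {φ : ℝ} (h0 : 0 < φ) (h1 : φ < 1) :
    Summable fun m : ℕ => ((m : ℝ) + 1) ^ κ * φ ^ m := by
  set k := ⌈κ⌉₊
  have hk : Summable fun m : ℕ => φ⁻¹ * (((m + 1 : ℕ) : ℝ) ^ k * φ ^ (m + 1)) := by
    have h := summable_pow_mul_geometric_of_norm_lt_one (R := ℝ) k
      (by rwa [Real.norm_of_nonneg h0.le])
    exact ((summable_nat_add_iff 1).2 h).mul_left _
  refine Summable.of_nonneg_of_le (fun m => by positivity) (fun m => ?_) hk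
  have hpow : ((m : ℝ) + 1) ^ κ ≤ ((m : ℝ) + 1) ^ k := by
    rw [← rpow_natCast]
    exact rpow_le_rpow_of_exponent_le (by linarith [m.cast_nonneg (α := ℝ)]) (Nat.le_ceil κ)
  calc ((m : ℝ) + 1) ^ κ * φ ^ m ≤ ((m : ℝ) + 1) ^ k * φ ^ m := by gcongr
    _ = φ⁻¹ * (((m + 1 : ℕ) : ℝ) ^ k * φ ^ (m + 1)) := by
      push_cast; field_simp; ring

lemma zSeries_nonneg (κ : ℝ) {φ : ℝ} (h0 : 0 ≤ φ) : 0 ≤ zSeries κ φ :=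
  tsum_nonneg fun m => by positivity

lemma rpow_le_rpow_mul_exp {κ t : ℝ} (hκ : 0 ≤ κ) (ht : 0 ≤ t) : t ^ κ ≤ κ ^ κ * exp t := by
  rcases hκ.eq_or_lt with rfl | hκ
  · simpa using one_le_exp ht
  calc t ^ κ = κ ^ κ * (t / κ) ^ κ := by
        rw [← mul_rpow hκ.le (by positivity), mul_div_cancel₀ _ hκ.ne']
    _ ≤ κ ^ κ * exp (t / κ) ^ κ := by
        gcongr
        linarith [add_one_le_exp (t / κ)]
    _ = κ ^ κ * exp t := by rw [← exp_mul, div_mul_cancel₀ _ hκ.ne']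

lemma exp_neg_le_one_sub_half {s : ℝ} (hs0 : 0 ≤ s) (hs1 : s ≤ 1 / 2) : exp (-s) ≤ 1 - s / 2 := by
  have h := abs_exp_sub_one_sub_id_le (x := -s) (by rw [abs_neg, abs_of_nonneg hs0]; linarith)
  nlinarith [le_abs_self (exp (-s) - 1 - -s)]

lemma exp_le_two_of_le_half {s : ℝ} (hs0 : 0 ≤ s) (hs1 : s ≤ 1 / 2) : exp s ≤ 2 := by
  have h := abs_exp_sub_one_sub_id_le (x := s) (by rw [abs_of_nonneg hs0]; linarith)
  nlinarith [le_abs_self (exp s - 1 - s)]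

lemma zSeries_exp_neg_le_of_nonneg {κ t : ℝ} (hκ : 0 ≤ κ) (ht0 : 0 < t) (ht1 : t ≤ 1) :
    zSeries κ (exp (-t)) ≤ 8 * (2 * κ) ^ κ * t ^ (-(κ + 1)) := by
  set q := exp (-(t / 2))
  have hq1 : q < 1 := exp_lt_one_iff.2 (by linarith)
  have hterm : ∀ m : ℕ,
      ((m : ℝ) + 1) ^ κ * exp (-t) ^ m ≤ (2 * κ / t) ^ κ * exp (t / 2) * q ^ m := by
    intro m
    have hm : ((m : ℝ) + 1) ^ κ ≤ (2 * κ / t) ^ κ * exp (t * (m + 1) / 2) := by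
      calc ((m : ℝ) + 1) ^ κ = (2 / t) ^ κ * (t * (m + 1) / 2) ^ κ := by
            rw [← mul_rpow (by positivity) (by positivity)]
            field_simp
        _ ≤ (2 / t) ^ κ * (κ ^ κ * exp (t * (m + 1) / 2)) := by
            gcongr
            exact rpow_le_rpow_mul_exp hκ (by positivity)
        _ = (2 * κ / t) ^ κ * exp (t * (m + 1) / 2) := by
            rw [← mul_assoc, ← mul_rpow (by positivity) hκ, div_mul_eq_mul_div]
    calc ((m : ℝ) + 1) ^ κ * exp (-t) ^ m
        ≤ (2 * κ / t) ^ κ * exp (t * (m + 1) / 2) * exp (-t) ^ m := by gcongr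
      _ = (2 * κ / t) ^ κ * exp (t / 2) * q ^ m := by
        rw [mul_assoc, mul_assoc, ← exp_nat_mul, ← exp_add, ← exp_nat_mul, ← exp_add]
        ring_nf
  have hgeom : ∑' m : ℕ, q ^ m ≤ 4 / t := by
    have := exp_neg_le_one_sub_half (s := t / 2) (by positivity) (by linarith)
    rw [tsum_geometric_of_lt_one (exp_pos _).le hq1, ← inv_div t 4]
    exact inv_anti₀ (by positivity) (by linarith)
  calc zSeries κ (exp (-t)) ≤ ∑' m : ℕ, (2 * κ / t) ^ κ * exp (t / 2) * q ^ m :=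
        Summable.tsum_le_tsum hterm
          (summable_rpow_mul_pow κ (exp_pos _) (exp_lt_one_iff.2 (by linarith)))
          ((summable_geometric_of_lt_one (exp_pos _).le hq1).mul_left _)
    _ ≤ (2 * κ / t) ^ κ * 2 * (4 / t) := by
        rw [tsum_mul_left]
        gcongr
        exact exp_le_two_of_le_half (by positivity) (by linarith)
    _ = 8 * (2 * κ) ^ κ * t ^ (-(κ + 1)) := by
        rw [div_rpow (by positivity) ht0.le, rpow_neg ht0.le, rpow_add_one ht0.ne']
        field_simp
        ring

lemma rpow_sub_one_le_sub_rpow_div {p x : ℝ} (hp0 : 0 < p) (hp1 : p ≤ 1) (hx : 1 ≤ x) :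
    x ^ (p - 1) ≤ (x ^ p - (x - 1) ^ p) / p := by
  have hx0 : 0 < x := by linarith
  have hbern := rpow_one_add_le_one_add_mul_self (s := -x⁻¹)
    (by linarith [inv_le_one_of_one_le₀ hx]) hp0.le hp1
  have hsplit : (x - 1) ^ p = (1 + -x⁻¹) ^ p * x ^ p := by
    rw [← mul_rpow (by linarith [inv_le_one_of_one_le₀ hx]) hx0.le]
    congr 1
    field_simp
    ring
  have hxp : x ^ p = x ^ (p - 1) * x := by rw [← rpow_add_one hx0.ne', sub_add_cancel]
  rw [le_div_iff₀ hp0, hsplit]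
  calc x ^ (p - 1) * p = x ^ p - (1 + p * -x⁻¹) * x ^ p := by
        rw [hxp]; field_simp; ring
    _ ≤ x ^ p - (1 + -x⁻¹) ^ p * x ^ p := by gcongr

lemma zSeries_le_mul_zSeries_add_one {κ φ : ℝ} (hκ : -1 < κ) (hκ0 : κ ≤ 0) (h0 : 0 < φ)
    (h1 : φ < 1) : zSeries κ φ ≤ (1 - φ) / (κ + 1) * zSeries (κ + 1) φ := by
  set p := κ + 1
  have hp0 : 0 < p := by linarith
  have hsum := summable_rpow_mul_pow p h0 h1
  have hsum' : Summable fun m : ℕ => (m : ℝ) ^ p * φ ^ m :=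
    Summable.of_nonneg_of_le (fun m => by positivity)
      (fun m => by gcongr; linarith) hsum
  have hshift : ∑' m : ℕ, (m : ℝ) ^ p * φ ^ m = φ * zSeries p φ := by
    rw [hsum'.tsum_eq_zero_add, zSeries, ← tsum_mul_left]
    simp only [Nat.cast_zero, zero_rpow hp0.ne', zero_mul, zero_add, Nat.cast_add, Nat.cast_one]
    congr 1
    ext m
    ring
  have hterm : ∀ m : ℕ, ((m : ℝ) + 1) ^ κ * φ ^ m
      ≤ (((m : ℝ) + 1) ^ p * φ ^ m - (m : ℝ) ^ p * φ ^ m) / p := by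
    intro m
    have h := rpow_sub_one_le_sub_rpow_div hp0 (by linarith) (le_add_of_nonneg_left m.cast_nonneg)
    rw [add_sub_cancel_right, add_sub_cancel_right] at h
    calc ((m : ℝ) + 1) ^ κ * φ ^ m ≤ (((m : ℝ) + 1) ^ p - (m : ℝ) ^ p) / p * φ ^ m := by gcongr
      _ = _ := by ring
  calc zSeries κ φ ≤ ∑' m : ℕ, (((m : ℝ) + 1) ^ p * φ ^ m - (m : ℝ) ^ p * φ ^ m) / p :=
        Summable.tsum_le_tsum hterm (summable_rpow_mul_pow κ h0 h1) ((hsum.sub hsum').div_const _)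
    _ = (1 - φ) / p * zSeries p φ := by
        rw [tsum_div_const, hsum.tsum_sub hsum', hshift, zSeries]
        ring

noncomputable def zConst (κ : ℝ) : ℝ := max (8 * (2 * κ) ^ κ) (16 / (κ + 1))

lemma zConst_pos {κ : ℝ} (hκ : -1 < κ) : 0 < zConst κ :=
  lt_max_of_lt_right (div_pos (by norm_num) (by linarith))

lemma zSeries_exp_neg_le {κ t : ℝ} (hκ : -1 < κ) (ht0 : 0 < t) (ht1 : t ≤ 1) :
    zSeries κ (exp (-t)) ≤ zConst κ * t ^ (-(κ + 1)) := by
  rcases le_total 0 κ with hκ0 | hκ0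
  · exact (zSeries_exp_neg_le_of_nonneg hκ0 ht0 ht1).trans (by gcongr; exact le_max_left _ _)
  set p := κ + 1
  have hp0 : 0 < p := by linarith
  have h2p : (2 * p) ^ p ≤ 2 := by
    calc (2 * p) ^ p ≤ 2 ^ p := rpow_le_rpow (by positivity) (by linarith) hp0.le
      _ ≤ 2 ^ (1 : ℝ) := rpow_le_rpow_of_exponent_le (by norm_num) (by linarith)
      _ = 2 := rpow_one 2
  calc zSeries κ (exp (-t)) ≤ (1 - exp (-t)) / p * zSeries p (exp (-t)) :=
        zSeries_le_mul_zSeries_add_one hκ hκ0 (exp_pos _) (exp_lt_one_iff.2 (by linarith))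
    _ ≤ t / p * (8 * (2 * p) ^ p * t ^ (-(p + 1))) := by
        gcongr
        · exact zSeries_nonneg p (exp_pos _).le
        · linarith [one_sub_le_exp_neg t]
        · exact zSeries_exp_neg_le_of_nonneg hp0.le ht0 ht1
    _ ≤ t / p * (8 * 2 * t ^ (-(p + 1))) := by gcongr
    _ = 16 / p * t ^ (-p) := by
        rw [neg_add, rpow_add ht0, rpow_neg_one]
        field_simp
        norm_num
    _ ≤ zConst κ * t ^ (-(κ + 1)) := by gcongr; exact le_max_right _ _

lemma Acomp_nonneg (κ : ℝ) (ℓ n : ℕ) : 0 ≤ Acomp κ ℓ n :=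
  sum_nonneg fun _ _ => prod_nonneg fun _ _ => by positivity

lemma Acomp_mul_pow (κ φ : ℝ) (ℓ n : ℕ) :
    Acomp κ ℓ n * φ ^ n
      = ∑ x ∈ Finset.Nat.antidiagonalTuple ℓ n, ∏ y, ((x y : ℝ) + 1) ^ κ * φ ^ x y := by
  rw [Acomp, sum_mul]
  refine sum_congr rfl fun x hx => ?_
  rw [prod_mul_distrib, prod_pow_eq_pow_sum, (Finset.Nat.mem_antidiagonalTuple).1 hx]

lemma sum_Acomp_mul_pow_le (κ : ℝ) {φ : ℝ} (h0 : 0 < φ) (h1 : φ < 1) (ℓ N : ℕ) :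
    ∑ n ∈ range (N + 1), Acomp κ ℓ n * φ ^ n ≤ zSeries κ φ ^ ℓ := by
  set f : ℕ → ℝ := fun m => ((m : ℝ) + 1) ^ κ * φ ^ m
  have hdisj : (range (N + 1) : Set ℕ).PairwiseDisjoint (Finset.Nat.antidiagonalTuple ℓ) :=
    fun a _ b _ hab => disjoint_left.2 fun x hxa hxb =>
      hab ((Finset.Nat.mem_antidiagonalTuple.1 hxa).symm.trans
        (Finset.Nat.mem_antidiagonalTuple.1 hxb))
  have hsub : (range (N + 1)).biUnion (Finset.Nat.antidiagonalTuple ℓ)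
      ⊆ Fintype.piFinset fun _ : Fin ℓ => range (N + 1) := by
    intro x hx
    obtain ⟨n, hn, hxn⟩ := mem_biUnion.1 hx
    rw [Fintype.mem_piFinset]
    intro y
    have hy : x y ≤ n := Finset.Nat.mem_antidiagonalTuple.1 hxn ▸
      single_le_sum (fun _ _ => Nat.zero_le _) (mem_univ y)
    rw [mem_range] at hn ⊢
    omega
  calc ∑ n ∈ range (N + 1), Acomp κ ℓ n * φ ^ n
      = ∑ x ∈ (range (N + 1)).biUnion (Finset.Nat.antidiagonalTuple ℓ), ∏ y, f (x y) := by
        rw [sum_biUnion hdisj]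
        exact sum_congr rfl fun n _ => Acomp_mul_pow κ φ ℓ n
    _ ≤ ∑ x ∈ Fintype.piFinset fun _ : Fin ℓ => range (N + 1), ∏ y, f (x y) :=
        sum_le_sum_of_subset_of_nonneg hsub fun _ _ _ => prod_nonneg fun _ _ => by positivity
    _ = (∑ m ∈ range (N + 1), f m) ^ ℓ := by rw [← prod_univ_sum, prod_const, card_univ,
          Fintype.card_fin]
    _ ≤ zSeries κ φ ^ ℓ := by
        gcongr
        exact (summable_rpow_mul_pow κ h0 h1).sum_le_tsum _ fun _ _ => by positivity

lemma sum_Acomp_le (κ : ℝ) {φ : ℝ} (h0 : 0 < φ) (h1 : φ < 1) (ℓ N : ℕ) :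
    ∑ n ∈ range (N + 1), Acomp κ ℓ n ≤ (φ ^ N)⁻¹ * zSeries κ φ ^ ℓ := by
  rw [← div_eq_inv_mul, le_div_iff₀ (by positivity), sum_mul]
  refine (sum_le_sum fun n hn => ?_).trans (sum_Acomp_mul_pow_le κ h0 h1 ℓ N)
  exact mul_le_mul_of_nonneg_left
    (pow_le_pow_of_le_one h0.le h1.le (Nat.lt_succ_iff.1 (mem_range.1 hn))) (Acomp_nonneg κ ℓ n)

lemma sum_Acomp_le_zConst_pow_mul_exp {κ C L : ℝ} (hκ : -1 < κ) (hL : 1 ≤ log L) {ℓ N : ℕ}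
    (hℓ : 1 ≤ ℓ) (hℓL : (ℓ : ℝ) ≤ L) (hN : (N : ℝ) ≤ C * L) :
    ∑ n ∈ range (N + 1), Acomp κ ℓ n
      ≤ (zConst κ * (L * log L / ℓ) ^ (κ + 1)) ^ ℓ * exp (C * ℓ / log L) := by
  have hℓ0 : (0 : ℝ) < ℓ := by exact_mod_cast hℓ
  have hL0 : 0 < L := hℓ0.trans_le hℓL
  set t := ℓ / (L * log L) with ht
  have ht0 : 0 < t := by positivity
  have ht1 : t ≤ 1 := by
    rw [div_le_one (by positivity)]
    nlinarith
  have hexp : (exp (-t) ^ N)⁻¹ ≤ exp (C * ℓ / log L) := by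
    rw [← exp_nat_mul, ← exp_neg, exp_le_exp]
    calc -(N * -t) = t * N := by ring
      _ ≤ t * (C * L) := by gcongr
      _ = C * ℓ / log L := by rw [ht]; field_simp
  have hz : zSeries κ (exp (-t)) ≤ zConst κ * (L * log L / ℓ) ^ (κ + 1) := by
    rw [← inv_div, inv_rpow (by positivity), ← rpow_neg (by positivity)]
    exact zSeries_exp_neg_le hκ ht0 ht1
  calc ∑ n ∈ range (N + 1), Acomp κ ℓ n ≤ (exp (-t) ^ N)⁻¹ * zSeries κ (exp (-t)) ^ ℓ :=
        sum_Acomp_le κ (exp_pos _) (exp_lt_one_iff.2 (by linarith)) ℓ N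
    _ ≤ exp (C * ℓ / log L) * (zConst κ * (L * log L / ℓ) ^ (κ + 1)) ^ ℓ := by
        have := zSeries_nonneg κ (exp_pos (-t)).le
        gcongr
    _ = _ := mul_comm _ _

lemma one_le_log_natCast {L : ℕ} (hL : 3 ≤ L) : 1 ≤ log L := by
  rw [le_log_iff_exp_le (by positivity)]
  exact exp_one_lt_three.le.trans (by exact_mod_cast hL)

lemma sum_Acomp_le_zConst_pow_mul_rpow_mul {κ C : ℝ} (hκ : -1 < κ) {L ℓ N : ℕ} (hL : 3 ≤ L)
    (hℓ : ℓ ∈ Icc 1 L) (hN : (N : ℝ) ≤ C * L) :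
    ∑ n ∈ range (N + 1), Acomp κ ℓ n
      ≤ zConst κ ^ ℓ * ((L : ℝ) * log L / ℓ) ^ ((κ + 1) * ℓ) * exp (C * ℓ / log L) * (N + 1) := by
  obtain ⟨hℓ1, hℓL⟩ := mem_Icc.1 hℓ
  have hz := (zConst_pos hκ).le
  have hY : 0 ≤ (L : ℝ) * log L / ℓ := by
    have := one_le_log_natCast hL
    positivity
  calc _ ≤ (zConst κ * ((L : ℝ) * log L / ℓ) ^ (κ + 1)) ^ ℓ * exp (C * ℓ / log L) :=
        sum_Acomp_le_zConst_pow_mul_exp hκ (one_le_log_natCast hL) hℓ1 (by exact_mod_cast hℓL) hN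
    _ = zConst κ ^ ℓ * ((L : ℝ) * log L / ℓ) ^ ((κ + 1) * ℓ) * exp (C * ℓ / log L) := by
        rw [mul_pow, ← rpow_natCast (_ ^ (κ + 1)), ← rpow_mul hY]
    _ ≤ _ := le_mul_of_one_le_right (by positivity) (by linarith [N.cast_nonneg (α := ℝ)])

lemma choose_le_exp_mul_div_pow (L ℓ : ℕ) : (L.choose ℓ : ℝ) ≤ (exp 1 * L / ℓ) ^ ℓ := by
  have hfact : (ℓ : ℝ) ^ ℓ ≤ exp 1 ^ ℓ * ℓ.factorial := by
    have h := pow_div_factorial_le_exp (ℓ : ℝ) ℓ.cast_nonneg ℓ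
    rwa [div_le_iff₀ (by positivity), ← exp_one_pow] at h
  rcases Nat.eq_zero_or_pos ℓ with rfl | hℓ
  · simp
  calc (L.choose ℓ : ℝ) ≤ (L : ℝ) ^ ℓ / ℓ.factorial := Nat.choose_le_pow_div ℓ L
    _ ≤ (L : ℝ) ^ ℓ * exp 1 ^ ℓ / (ℓ : ℝ) ^ ℓ := by
        rw [div_le_div_iff₀ (by positivity) (by positivity), mul_assoc]
        gcongr
    _ = (exp 1 * L / ℓ) ^ ℓ := by rw [div_pow, mul_pow, mul_comm]

lemma div_rpow_le_rpow {L ℓ b s : ℝ} (hL : 0 < L) (hb : 0 < b) (hℓ : L ^ (1 - s / b) ≤ ℓ) :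
    (L / ℓ) ^ b ≤ L ^ s := by
  have hpos : 0 < L ^ (1 - s / b) := rpow_pos_of_pos hL _
  have hquot : L / L ^ (1 - s / b) = L ^ (s / b) := by
    rw [div_eq_iff hpos.ne', ← rpow_add hL, add_sub_cancel, rpow_one]
  calc (L / ℓ) ^ b ≤ (L / L ^ (1 - s / b)) ^ b := by
        have := hpos.trans_le hℓ
        gcongr
    _ = L ^ s := by rw [hquot, ← rpow_mul hL.le, div_mul_cancel₀ _ hb.ne']

lemma choose_mul_sum_Acomp_le {κ γ θ C ε : ℝ} (hκ : -1 < κ) (hθ : 0 ≤ θ) (hC : 0 ≤ C)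
    {L ℓ N : ℕ} (hL : 1 ≤ log L) (hN : (N : ℝ) ≤ C * L)
    (hℓ : (L : ℝ) ^ (1 - γ / (2 * (κ + 2))) ≤ ℓ) (hℓL : ℓ ≤ L)
    (hlog : exp 1 * θ * zConst κ * exp C * log L ^ (κ + 1) ≤ (L : ℝ) ^ ε) :
    (L.choose ℓ : ℝ) * (θ ^ ℓ / (L : ℝ) ^ (ℓ * γ)) * ∑ n ∈ range (N + 1), Acomp κ ℓ n
      ≤ (L : ℝ) ^ ((-γ / 2 + ε) * ℓ) := by
  have hL0 : (0 : ℝ) < L := by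
    rcases L.eq_zero_or_pos with rfl | h
    · norm_num at hL
    · exact_mod_cast h
  have hℓ0 : (0 : ℝ) < ℓ := (rpow_pos_of_pos hL0 _).trans_le hℓ
  have hlog0 : 0 ≤ log L := by linarith
  have hz := (zConst_pos hκ).le
  set X := (L * log L / ℓ : ℝ) ^ (κ + 1) with hX
  have hsum : ∑ n ∈ range (N + 1), Acomp κ ℓ n ≤ (zConst κ * X * exp C) ^ ℓ := by
    calc _ ≤ (zConst κ * X) ^ ℓ * exp (C * ℓ / log L) :=
          sum_Acomp_le_zConst_pow_mul_exp hκ hL (by exact_mod_cast hℓ0) (by exact_mod_cast hℓL) hN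
      _ ≤ (zConst κ * X) ^ ℓ * exp (ℓ * C) := by
          gcongr
          rw [mul_comm, mul_div_assoc]
          exact mul_le_mul_of_nonneg_left (div_le_self hC hL) ℓ.cast_nonneg
      _ = (zConst κ * X * exp C) ^ ℓ := by rw [exp_nat_mul, ← mul_pow]
  have hθL : θ ^ ℓ / (L : ℝ) ^ (ℓ * γ) = (θ * (L : ℝ) ^ (-γ)) ^ ℓ := by
    rw [mul_pow, rpow_neg hL0.le, inv_pow, ← rpow_natCast ((L : ℝ) ^ γ) ℓ, ← rpow_mul hL0.le,
      mul_comm γ, div_eq_mul_inv]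
  have hbase : exp 1 * L / ℓ * (θ * (L : ℝ) ^ (-γ)) * (zConst κ * X * exp C)
      = exp 1 * θ * zConst κ * exp C * log L ^ (κ + 1)
        * (((L : ℝ) / ℓ) ^ (κ + 2) * (L : ℝ) ^ (-γ)) := by
    rw [hX, mul_div_right_comm (L : ℝ), mul_rpow (by positivity) hlog0,
      show κ + 2 = κ + 1 + 1 by ring, rpow_add_one (by positivity : (L : ℝ) / ℓ ≠ 0) (κ + 1)]
    ring
  have hratio : ((L : ℝ) / ℓ) ^ (κ + 2) ≤ (L : ℝ) ^ (γ / 2) :=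
    div_rpow_le_rpow hL0 (by linarith) (by rwa [div_div])
  calc _ = (L.choose ℓ : ℝ) * (θ * (L : ℝ) ^ (-γ)) ^ ℓ * ∑ n ∈ range (N + 1), Acomp κ ℓ n := by
        rw [hθL]
    _ ≤ (exp 1 * L / ℓ) ^ ℓ * (θ * (L : ℝ) ^ (-γ)) ^ ℓ * (zConst κ * X * exp C) ^ ℓ := by
        gcongr
        · exact sum_nonneg fun n _ => Acomp_nonneg κ ℓ n
        · exact choose_le_exp_mul_div_pow L ℓ
    _ = (exp 1 * θ * zConst κ * exp C * log L ^ (κ + 1)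
          * (((L : ℝ) / ℓ) ^ (κ + 2) * (L : ℝ) ^ (-γ))) ^ ℓ := by
        rw [← mul_pow, ← mul_pow, hbase]
    _ ≤ ((L : ℝ) ^ ε * ((L : ℝ) ^ (γ / 2) * (L : ℝ) ^ (-γ))) ^ ℓ := by gcongr
    _ = (L : ℝ) ^ ((-γ / 2 + ε) * ℓ) := by
        rw [← rpow_add hL0, ← rpow_add hL0, ← rpow_natCast, ← rpow_mul hL0.le]
        ring_nf


lemma eventually_mul_log_rpow_le_rpow (K r : ℝ) {s : ℝ} (hs : 0 < s) :
    ∀ᶠ x : ℝ in atTop, K * log x ^ r ≤ x ^ s := by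
  filter_upwards [((isLittleO_log_rpow_rpow_atTop r hs).const_mul_left K).def one_pos,
    eventually_ge_atTop 0] with x hx hx0
  rw [one_mul, norm_of_nonneg (rpow_nonneg hx0 s)] at hx
  exact (le_abs_self _).trans hx

lemma sum_Icc_rpow_mul_le {L m : ℕ} {c : ℝ} (hL : 1 ≤ L) (hc : c ≤ 0) (hm : c * m ≤ -2) :
    ∑ ℓ ∈ Icc m L, (L : ℝ) ^ (c * ℓ) ≤ 2 / L := by
  have hL1 : (1 : ℝ) ≤ L := by exact_mod_cast hL
  have hterm : ∀ ℓ ∈ Icc m L, (L : ℝ) ^ (c * ℓ) ≤ ((L : ℝ) ^ 2)⁻¹ := by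
    intro ℓ hℓ
    have hmℓ : (m : ℝ) ≤ ℓ := by exact_mod_cast (mem_Icc.1 hℓ).1
    calc (L : ℝ) ^ (c * ℓ) ≤ (L : ℝ) ^ (-2 : ℝ) :=
          rpow_le_rpow_of_exponent_le hL1 (by nlinarith)
      _ = ((L : ℝ) ^ 2)⁻¹ := by rw [rpow_neg (by positivity), rpow_two]
  calc _ ≤ #(Icc m L) • ((L : ℝ) ^ 2)⁻¹ := sum_le_card_nsmul _ _ _ hterm
    _ ≤ ((L : ℝ) + 1) * ((L : ℝ) ^ 2)⁻¹ := by
        rw [nsmul_eq_mul, Nat.card_Icc]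
        gcongr
        exact_mod_cast (by omega : L + 1 - m ≤ L + 1)
    _ ≤ 2 / L := by
        rw [← div_eq_mul_inv, div_le_div_iff₀ (by positivity) (by positivity)]
        nlinarith

lemma tailSum_nonneg (κ γ : ℝ) {θ : ℝ} (hθ : 0 ≤ θ) (N : ℕ → ℕ) (L : ℕ) :
    0 ≤ tailSum κ γ θ N L :=
  sum_nonneg fun ℓ _ => mul_nonneg (by positivity) (sum_nonneg fun n _ => Acomp_nonneg κ ℓ n)

theorem tail_bound_large_ell (κ γ θ C : ℝ)
    (hκ : -1 < κ) (hγ : 0 < γ) (hγκ : γ < κ + 2) (hθ : 0 < θ) (hC : 0 < C)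
    (N : ℕ → ℕ) (hN : ∀ L : ℕ, (N L : ℝ) ≤ C * L) :
    (∃ Cκ : ℝ, 0 < Cκ ∧ ∃ L₁ : ℕ, ∀ L : ℕ, L₁ ≤ L →
      ∀ ℓ ∈ Finset.Icc 1 L,
        ∑ n ∈ Finset.range (N L + 1), Acomp κ ℓ n
          ≤ Cκ ^ ℓ * ((L : ℝ) * Real.log L / ℓ) ^ ((κ + 1) * ℓ)
              * Real.exp (C * ℓ / Real.log L) * (N L + 1)) ∧
    ∃ ε : ℝ, 0 < ε ∧ ε < γ / 4 ∧
      (∃ L₀ : ℕ, ∀ L : ℕ, L₀ ≤ L →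
        tailSum κ γ θ N L
          ≤ ∑ ℓ ∈ Finset.Icc ⌈(L : ℝ) ^ (1 - γ / (2 * (κ + 2)))⌉₊ L,
              (L : ℝ) ^ ((-γ / 2 + ε) * ℓ)) ∧
      Tendsto (tailSum κ γ θ N) atTop (nhds 0) := by
  refine ⟨⟨zConst κ, zConst_pos hκ, 3, fun L hL ℓ hℓ =>
    sum_Acomp_le_zConst_pow_mul_rpow_mul hκ hL hℓ (hN L)⟩, γ / 8, by positivity, by linarith, ?_⟩
  have hcut : 0 < 1 - γ / (2 * (κ + 2)) := by
    rw [sub_pos, div_lt_one (by linarith)]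
    linarith
  obtain ⟨L₀, hL₀⟩ := eventually_atTop.1 <| (eventually_ge_atTop 3).and <|
    tendsto_natCast_atTop_atTop.eventually <|
      (eventually_mul_log_rpow_le_rpow (exp 1 * θ * zConst κ * exp C) (κ + 1)
        (by positivity : 0 < γ / 8)).and <|
      (tendsto_rpow_atTop hcut).eventually_ge_atTop (16 / (3 * γ))
  have hbound : ∀ L : ℕ, L₀ ≤ L → tailSum κ γ θ N L
      ≤ ∑ ℓ ∈ Icc ⌈(L : ℝ) ^ (1 - γ / (2 * (κ + 2)))⌉₊ L, (L : ℝ) ^ ((-γ / 2 + γ / 8) * ℓ) := by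
    intro L hL
    obtain ⟨h3, hK, -⟩ := hL₀ L hL
    refine sum_le_sum fun ℓ hℓ => choose_mul_sum_Acomp_le hκ hθ.le hC.le
      (one_le_log_natCast h3) (hN L) ?_ (mem_Icc.1 hℓ).2 hK
    exact (Nat.le_ceil _).trans (by exact_mod_cast (mem_Icc.1 hℓ).1)
  refine ⟨⟨L₀, hbound⟩, squeeze_zero' (Eventually.of_forall (tailSum_nonneg κ γ hθ.le N)) ?_
    (tendsto_const_div_atTop_nhds_zero_nat 2)⟩
  filter_upwards [eventually_ge_atTop L₀] with L hL
  obtain ⟨h3, -, hm⟩ := hL₀ L hL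
  refine (hbound L hL).trans (sum_Icc_rpow_mul_le (by omega) (by linarith) ?_)
  have hceil := hm.trans (Nat.le_ceil _)
  rw [div_le_iff₀ (by positivity)] at hceil
  nlinarith
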